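/- Orthogonal alignment of matrices with equal Gram matrices (Lemma on R_swap): let A, B ∈ ℝ^{n×m} satisfy AᵀA = BᵀB. Then there exists an orthogonal matrix R ∈ ℝ^{n×n} (i.e., RᵀR = I_n) such that R A = B. In particular, for a knockoff matrix X̃ for X and any S ⊆ {1,…,p}, there exists an orthogonal R with R[X X̃] = [X X̃]_swap(S). -/

import Mathlib

/-!
If `AᵀA = BᵀB` then `‖A x‖ = ‖B x‖` for every `x`, so `A x ↦ B x` is a well-defined linear
isometry from the column space of `A` into `ℝⁿ`; extending it to an isometry of all of `ℝⁿ`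
gives `R`. For knockoffs, the Gram matrix of `[X X̃]` is `[[Σ, Σ - D], [Σ - D, Σ]]` with
`Σ = XᵀX`, `D = diag s`; the swap conjugates it by a permutation that fixes it, because the
blocks `Σ` and `Σ - D` differ only on the diagonal.
-/

open Matrix BigOperators

/-- The column-index permutation that swaps an original feature `j` with its
knockoff copy exactly when `j ∈ S`. -/
def knockoffSwap {p : ℕ} (S : Finset (Fin p)) : Fin p ⊕ Fin p → Fin p ⊕ Fin p
  | Sum.inl j => if j ∈ S then Sum.inr j else Sum.inl j
  | Sum.inr j => if j ∈ S then Sum.inl j else Sum.inr j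

theorem exists_linearIsometry_comp_eq_of_norm_eq {𝕜 E V : Type*} [RCLike 𝕜] [AddCommGroup E]
    [Module 𝕜 E] [NormedAddCommGroup V] [InnerProductSpace 𝕜 V] [FiniteDimensional 𝕜 V]
    (f g : E →ₗ[𝕜] V) (h : ∀ x, ‖f x‖ = ‖g x‖) :
    ∃ G : V →ₗᵢ[𝕜] V, G.toLinearMap ∘ₗ f = g := by
  have hker : LinearMap.ker f ≤ LinearMap.ker g := fun x hx ↦ by
    rw [LinearMap.mem_ker, ← norm_eq_zero, ← h, norm_eq_zero, ← LinearMap.mem_ker]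
    exact hx
  let L : LinearMap.range f →ₗ[𝕜] V :=
    (LinearMap.ker f).liftQ g hker ∘ₗ f.quotKerEquivRange.symm.toLinearMap
  have hL : ∀ x, L ⟨f x, LinearMap.mem_range_self f x⟩ = g x := fun x ↦ by
    simp [L, LinearMap.quotKerEquivRange_symm_apply_image]
  let L' : LinearMap.range f →ₗᵢ[𝕜] V :=
    ⟨L, by rintro ⟨_, x, rfl⟩; rw [hL, ← h]; rfl⟩
  refine ⟨L'.extend, LinearMap.ext fun x ↦ ?_⟩
  exact (L'.extend_apply ⟨f x, LinearMap.mem_range_self f x⟩).trans (hL x)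

section

variable {𝕜 m n : Type*} [RCLike 𝕜] [Fintype m] [DecidableEq m] [Fintype n] [DecidableEq n]

theorem Matrix.norm_toEuclideanLin_eq_of_conjTranspose_mul_self_eq {A B : Matrix m n 𝕜}
    (h : Aᴴ * A = Bᴴ * B) (x : EuclideanSpace 𝕜 n) :
    ‖toEuclideanLin A x‖ = ‖toEuclideanLin B x‖ := by
  have inner_self_eq : ∀ C : Matrix m n 𝕜, inner 𝕜 (toEuclideanLin C x) (toEuclideanLin C x) =
      inner 𝕜 x (toEuclideanLin (Cᴴ * C) x) := fun C ↦ by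
    rw [toLpLin_mul, LinearMap.comp_apply, toEuclideanLin_conjTranspose_eq_adjoint,
      LinearMap.adjoint_inner_right]
  have hsq : ‖toEuclideanLin A x‖ ^ 2 = ‖toEuclideanLin B x‖ ^ 2 := by
    rw [@norm_sq_eq_re_inner 𝕜, @norm_sq_eq_re_inner 𝕜, inner_self_eq, inner_self_eq, h]
  exact (sq_eq_sq₀ (norm_nonneg _) (norm_nonneg _)).1 hsq

theorem Matrix.exists_mem_unitaryGroup_mul_eq_of_conjTranspose_mul_self_eq
    {A B : Matrix m n 𝕜} (h : Aᴴ * A = Bᴴ * B) : ∃ R ∈ unitaryGroup m 𝕜, R * A = B := by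
  obtain ⟨G, hG⟩ := exists_linearIsometry_comp_eq_of_norm_eq _ _
    (norm_toEuclideanLin_eq_of_conjTranspose_mul_self_eq h)
  refine ⟨toEuclideanLin.symm G.toLinearMap, ?_, toEuclideanLin.injective ?_⟩
  · rw [mem_unitaryGroup_iff', star_eq_conjTranspose]
    apply toEuclideanLin.injective
    rw [toLpLin_mul, toEuclideanLin_conjTranspose_eq_adjoint, LinearEquiv.apply_symm_apply,
      toLpLin_one]
    exact G.adjoint_comp_self'
  · rw [toLpLin_mul, LinearEquiv.apply_symm_apply, hG]

theorem Matrix.exists_orthogonal_mul_eq_of_transpose_mul_self_eq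
    {A B : Matrix m n ℝ} (h : Aᵀ * A = Bᵀ * B) : ∃ R : Matrix m m ℝ, Rᵀ * R = 1 ∧ R * A = B := by
  simp only [← conjTranspose_eq_transpose_of_trivial] at h ⊢
  obtain ⟨R, hR, hRA⟩ := exists_mem_unitaryGroup_mul_eq_of_conjTranspose_mul_self_eq h
  exact ⟨R, (mem_unitaryGroup_iff').1 hR, hRA⟩

end

theorem Matrix.transpose_mul_self_submatrix {l m n α : Type*} [Fintype m] [Mul α]
    [AddCommMonoid α] (A : Matrix m n α) (e : l → n) :
    (A.submatrix id e)ᵀ * A.submatrix id e = (Aᵀ * A).submatrix e e :=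
  rfl

theorem Matrix.fromCols_transpose_mul_fromCols_of_knockoff {m α : Type*} [Fintype m] [CommRing α]
    {p : ℕ} {X Xt : Matrix m (Fin p) α} {s : Fin p → α}
    (h₁ : Xtᵀ * Xt = Xᵀ * X) (h₂ : Xᵀ * Xt = Xᵀ * X - diagonal s) :
    (fromCols X Xt)ᵀ * fromCols X Xt =
      fromBlocks (Xᵀ * X) (Xᵀ * X - diagonal s) (Xᵀ * X - diagonal s) (Xᵀ * X) := by
  have h₃ : Xtᵀ * X = Xᵀ * X - diagonal s := by
    rw [← transpose_transpose X, ← transpose_mul, h₂, transpose_sub, transpose_mul,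
      transpose_transpose, diagonal_transpose]
  rw [transpose_fromCols, fromRows_mul_fromCols, h₁, h₂, h₃]

theorem fromBlocks_submatrix_knockoffSwap {α : Type*} [AddGroup α] {p : ℕ}
    (P : Matrix (Fin p) (Fin p) α) (d : Fin p → α) (S : Finset (Fin p)) :
    (fromBlocks P (P - diagonal d) (P - diagonal d) P).submatrix (knockoffSwap S) (knockoffSwap S)
      = fromBlocks P (P - diagonal d) (P - diagonal d) P := by
  ext (i | i) (j | j) <;> by_cases hi : i ∈ S <;> by_cases hj : j ∈ S <;>
    simp only [knockoffSwap, hi, hj, if_true, if_false, submatrix_apply, fromBlocks_apply₁₁,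
      fromBlocks_apply₁₂, fromBlocks_apply₂₁, fromBlocks_apply₂₂]
  all_goals
    have hij : i ≠ j := by rintro rfl; contradiction
    simp [diagonal_apply_ne _ hij]

/-- **Orthogonal alignment of matrices with equal Gram matrices.** If `A, B ∈ ℝ^{n×m}`
satisfy `AᵀA = BᵀB`, then there is an orthogonal `R ∈ ℝ^{n×n}` with `R A = B`.
In particular, for a knockoff matrix `X̃` for `X` and any `S ⊆ {1,…,p}`, there is an
orthogonal `R` with `R [X X̃] = [X X̃]_swap(S)`. -/
theorem orthogonal_alignment (n m : ℕ) (A B : Matrix (Fin n) (Fin m) ℝ)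
    (h : Aᵀ * A = Bᵀ * B) :
    (∃ R : Matrix (Fin n) (Fin n) ℝ, Rᵀ * R = 1 ∧ R * A = B) ∧
    (∀ (p : ℕ) (X Xt : Matrix (Fin n) (Fin p) ℝ) (s : Fin p → ℝ),
      Xtᵀ * Xt = Xᵀ * X →
      Xᵀ * Xt = Xᵀ * X - Matrix.diagonal s →
      (∀ j, 0 ≤ s j) →
      ∀ S : Finset (Fin p),
        ∃ R : Matrix (Fin n) (Fin n) ℝ, Rᵀ * R = 1 ∧
          R * Matrix.fromCols X Xt
            = (Matrix.fromCols X Xt).submatrix id (knockoffSwap S)) := by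
  refine ⟨exists_orthogonal_mul_eq_of_transpose_mul_self_eq h,
    fun p X Xt s h₁ h₂ _ S ↦ exists_orthogonal_mul_eq_of_transpose_mul_self_eq ?_⟩
  rw [transpose_mul_self_submatrix, fromCols_transpose_mul_fromCols_of_knockoff h₁ h₂,
    fromBlocks_submatrix_knockoffSwap]
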